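/- arXiv:1902.08133 — 6 statements merged into one kernel-verified Lean document; each statement's English description precedes it below -/
import Mathlib

section
/- For n ≥ 4, the total number of cycles in the complete bipartite Turán graph T_2(n) is at most 2e times the number of cycles of length 2⌊n/2⌋ in T_2(n). -/
open SimpleGraph Finset

/-- The cycle graph on `ZMod r`. -/
def cycGraph (r : ℕ) : SimpleGraph (ZMod r) := SimpleGraph.fromRel (fun a b => a = b + 1)

/-- The number of injective graph homomorphisms from `H` to `G`
(labelled copies of `H` as a subgraph of `G`). -/
noncomputable def copyCnt {α β : Type*} (H : SimpleGraph α) (G : SimpleGraph β) : ℕ :=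
  Nat.card {f : α → β // Function.Injective f ∧ ∀ a b, H.Adj a b → G.Adj (f a) (f b)}

/-- The number of cycles of length `r` in `G`, counted as subgraphs
(i.e. up to starting vertex and orientation). -/
noncomputable def cycCount {V : Type*} (r : ℕ) (G : SimpleGraph V) : ℕ := copyCnt (cycGraph r) G / (2 * r)

/-- The total number of cycles in `G`. -/
noncomputable def totCycCount {V : Type*} [Fintype V] (G : SimpleGraph V) : ℕ :=
  ∑ r ∈ Finset.Icc 3 (Fintype.card V), cycCount r G

/-- The number of Hamiltonian cycles in `G`. -/
noncomputable def hamCnt {V : Type*} [Fintype V] (G : SimpleGraph V) : ℕ := cycCount (Fintype.card V) G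

/-- `G` contains no subgraph isomorphic to `H`. -/
def Freeof {α β : Type*} (H : SimpleGraph α) (G : SimpleGraph β) : Prop :=
  ¬ ∃ f : α → β, Function.Injective f ∧ ∀ a b, H.Adj a b → G.Adj (f a) (f b)

/-!
A homomorphism from a cycle to `T₂(n)` must alternate between the two parts (even and odd
vertices). Hence `T₂(n)` has no odd cycles, and a labelled `2k`-cycle amounts to a choice of
the part containing its first vertex together with two injections of `k` points, one into each
part: there are `2 (⌈n/2⌉)_k (⌊n/2⌋)_k` of them. Writing `a = ⌊n/2⌋ ≤ b = ⌈n/2⌉`, the identities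
`(b)_a = (b)_k (b - k)_(a - k)` and `a! = (a)_k (a - k)!` together with `a ≤ 2k (a - k)!` show that
the ratio of the number of `2k`-cycles to the number of `2a`-cycles is at most `2 / (a - k)!`;
summing over `k` and using `∑ 1 / j! ≤ e` gives the bound.
-/

section InjectiveOver

variable {α β γ : Type*}

def injectiveOverEquiv (χ : α → γ) (κ : β → γ) :
    {f : α → β // Function.Injective f ∧ ∀ a, κ (f a) = χ a} ≃
      ∀ c, ({a // χ a = c} ↪ {b // κ b = c}) where
  toFun f c := ⟨fun a => ⟨f.1 a, (f.2.2 a).trans a.2⟩,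
    fun _ _ h => Subtype.ext (f.2.1 (congrArg Subtype.val h))⟩
  invFun g := by
    refine ⟨fun a => g (χ a) ⟨a, rfl⟩, fun a a' h => ?_, fun a => (g (χ a) ⟨a, rfl⟩).2⟩
    have hc : χ a = χ a' := (g (χ a) ⟨a, rfl⟩).2.symm.trans ((congrArg κ h).trans (g _ _).2)
    have hg : ∀ c (hac : χ a = c), (g c ⟨a, hac⟩ : β) = g (χ a) ⟨a, rfl⟩ := by
      rintro _ rfl; rfl
    change (g (χ a) ⟨a, rfl⟩ : β) = g (χ a') ⟨a', rfl⟩ at h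
    rw [← hg _ hc] at h
    exact congrArg Subtype.val ((g _).injective (Subtype.ext h))
  left_inv _ := rfl
  right_inv g := by
    funext c
    ext ⟨a, rfl⟩
    rfl

lemma card_injectiveOver [Fintype α] [Fintype β] [Fintype γ] (χ : α → γ) (κ : β → γ) :
    Nat.card {f : α → β // Function.Injective f ∧ ∀ a, κ (f a) = χ a} =
      ∏ c, (Nat.card {b // κ b = c}).descFactorial (Nat.card {a // χ a = c}) := by
  classical
  rw [Nat.card_congr (injectiveOverEquiv χ κ), Nat.card_pi]
  congr 1 with c
  simp only [Nat.card_eq_fintype_card, Fintype.card_embedding_eq]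

end InjectiveOver

lemma card_fin_natCast_eq (n m : ℕ) [NeZero m] (e : ZMod m) :
    Nat.card {v : Fin n // ((v : ℕ) : ZMod m) = e} = n / m + if e.val < n % m then 1 else 0 := by
  classical
  have hcount := Nat.count_modEq_card n (Nat.pos_of_neZero m) e.val
  rw [Nat.mod_eq_of_lt (ZMod.val_lt e)] at hcount
  let := Nat.CountSet.fintype (· ≡ e.val [MOD m]) n
  rw [← hcount, Nat.count_eq_card_fintype, ← Nat.card_eq_fintype_card]
  refine Nat.card_congr
    ⟨fun v => ⟨v.1, v.1.2,
        (ZMod.natCast_eq_natCast_iff _ _ _).1 (by rw [v.2, ZMod.natCast_zmod_val])⟩,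
      fun k => ⟨⟨k.1, k.2.1⟩,
        by rw [(ZMod.natCast_eq_natCast_iff _ _ _).2 k.2.2, ZMod.natCast_zmod_val]⟩,
      fun _ => rfl, fun _ => rfl⟩

lemma card_zmod_cast_eq (k : ℕ) [NeZero k] (e : ZMod 2) :
    Nat.card {i : ZMod (2 * k) // (ZMod.cast i : ZMod 2) = e} = k := by
  let toZMod : Fin (2 * k) ≃ ZMod (2 * k) :=
    ⟨fun j => (j : ℕ), fun i => ⟨i.val, ZMod.val_lt i⟩,
      fun j => Fin.ext (ZMod.val_natCast_of_lt j.2), ZMod.natCast_zmod_val⟩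
  rw [← Nat.card_congr (toZMod.subtypeEquiv (p := fun j : Fin (2 * k) => ((j : ℕ) : ZMod 2) = e)
    fun j => by rw [← ZMod.cast_natCast (dvd_mul_right 2 k) (R := ZMod 2)]; rfl),
    card_fin_natCast_eq]
  simp

lemma turanGraph_two_adj {n : ℕ} {v w : Fin n} :
    (turanGraph n 2).Adj v w ↔ ((v : ℕ) : ZMod 2) ≠ ((w : ℕ) : ZMod 2) := by
  rw [turanGraph_adj, ne_eq, ne_eq, ZMod.natCast_eq_natCast_iff']

lemma cycGraph_adj_iff {r : ℕ} {a b : ZMod r} :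
    (cycGraph r).Adj a b ↔ a ≠ b ∧ (a = b + 1 ∨ b = a + 1) :=
  SimpleGraph.fromRel_adj _ _ _

lemma cycGraph_adj_natCast_succ {r : ℕ} (hr : r ≠ 1) (m : ℕ) :
    (cycGraph r).Adj ((m + 1 : ℕ) : ZMod r) (m : ZMod r) := by
  have := ZMod.nontrivial_iff.2 hr
  rw [cycGraph_adj_iff, Nat.cast_succ]
  exact ⟨by simp, Or.inl rfl⟩

lemma parity_apply_natCast_of_isHom {n r : ℕ} (hr : r ≠ 1) {f : ZMod r → Fin n}
    (hf : ∀ a b, (cycGraph r).Adj a b → (turanGraph n 2).Adj (f a) (f b)) (m : ℕ) :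
    ((f m : ℕ) : ZMod 2) = (f 0 : ℕ) + m := by
  induction m with
  | zero => simp
  | succ m ih =>
    have hne := turanGraph_two_adj.1 (hf _ _ (cycGraph_adj_natCast_succ hr m))
    have hZ2 : ∀ x y : ZMod 2, x ≠ y → x = y + 1 := by decide
    rw [hZ2 _ _ hne, ih, Nat.cast_succ, add_assoc]

lemma copyCnt_cycGraph_turanGraph_two_of_odd {n r : ℕ} (hr : 1 < r) (hodd : Odd r) :
    copyCnt (cycGraph r) (turanGraph n 2) = 0 := by
  rw [copyCnt, Nat.card_eq_zero]
  refine Or.inl ⟨fun f => ?_⟩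
  have h := parity_apply_natCast_of_isHom hr.ne' f.2.2 r
  rw [ZMod.natCast_self, left_eq_add, ZMod.natCast_eq_zero_iff_even] at h
  exact Nat.not_even_iff_odd.2 hodd h

lemma isHom_cycGraph_turanGraph_two_iff {n r : ℕ} [NeZero r] (hr : 2 ∣ r) (f : ZMod r → Fin n) :
    (∀ a b, (cycGraph r).Adj a b → (turanGraph n 2).Adj (f a) (f b)) ↔
      ∀ i, ((f i : ℕ) : ZMod 2) = (f 0 : ℕ) + ZMod.cast i := by
  refine ⟨fun hf i => ?_, fun h a b hab => ?_⟩
  · have := parity_apply_natCast_of_isHom (by rintro rfl; omega) hf i.val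
    rwa [ZMod.natCast_zmod_val, ← ZMod.cast_eq_val] at this
  · have h1 : (ZMod.cast (1 : ZMod r) : ZMod 2) ≠ 0 := by rw [ZMod.cast_one hr]; decide
    rw [turanGraph_two_adj, h a, h b]
    rcases (cycGraph_adj_iff.1 hab).2 with rfl | rfl <;>
      simpa [ZMod.cast_add hr, ← add_assoc] using h1

lemma copyCnt_cycGraph_turanGraph_two_of_even (n k : ℕ) [NeZero k] :
    copyCnt (cycGraph (2 * k)) (turanGraph n 2) =
      2 * (((n + 1) / 2).descFactorial k * (n / 2).descFactorial k) := by
  let parity : Fin n → ZMod 2 := fun v => (v : ℕ)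
  -- sort the copies by the part containing the image of `0`
  have hcopies (c : ZMod 2) :
      Nat.card {f : {f : ZMod (2 * k) → Fin n // Function.Injective f ∧
          ∀ a b, (cycGraph (2 * k)).Adj a b → (turanGraph n 2).Adj (f a) (f b)} //
          parity (f.1 0) = c} =
        Nat.card {f : ZMod (2 * k) → Fin n // Function.Injective f ∧
          ∀ i, parity (f i) = c + ZMod.cast i} := by
    refine Nat.card_congr ((Equiv.subtypeSubtypeEquivSubtypeInter _
      (fun f : ZMod (2 * k) → Fin n => parity (f 0) = c)).trans
      (Equiv.subtypeEquivRight fun f => ?_))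
    rw [isHom_cycGraph_turanGraph_two_iff (dvd_mul_right 2 k)]
    constructor
    · rintro ⟨⟨hinj, hf⟩, rfl⟩
      exact ⟨hinj, hf⟩
    · rintro ⟨hinj, hf⟩
      have h0 : parity (f 0) = c := by simpa using hf 0
      exact ⟨⟨hinj, by rwa [← h0] at hf⟩, h0⟩
  have hdomain (c d : ZMod 2) : Nat.card {i : ZMod (2 * k) // c + ZMod.cast i = d} = k := by
    refine (Nat.card_congr (Equiv.subtypeEquivRight fun _ => ?_)).trans
      (card_zmod_cast_eq k (d - c))
    exact eq_sub_iff_add_eq'.symm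
  have hcodomain :
      ∏ d : ZMod 2, (Nat.card {v // parity v = d}).descFactorial k =
        ((n + 1) / 2).descFactorial k * (n / 2).descFactorial k := by
    rw [show (univ : Finset (ZMod 2)) = {0, 1} from rfl, prod_pair (by decide)]
    simp only [parity, card_fin_natCast_eq]
    have h0 : n / 2 + (if ZMod.val (0 : ZMod 2) < n % 2 then 1 else 0) = (n + 1) / 2 := by
      rw [ZMod.val_zero]; split_ifs <;> omega
    have h1 : n / 2 + (if ZMod.val (1 : ZMod 2) < n % 2 then 1 else 0) = n / 2 := by
      rw [ZMod.val_one]; split_ifs <;> omega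
    rw [h0, h1]
  rw [copyCnt, ← Nat.card_congr (Equiv.sigmaFiberEquiv fun f => parity (f.1 0)), Nat.card_sigma]
  simp only [hcopies, card_injectiveOver, hdomain, hcodomain, sum_const, card_univ, ZMod.card,
    smul_eq_mul]

lemma totCycCount_eq_sum_even {V : Type*} [Fintype V] (G : SimpleGraph V)
    (hodd : ∀ r, 1 < r → Odd r → cycCount r G = 0) :
    totCycCount G = ∑ k ∈ Icc 2 (Fintype.card V / 2), cycCount (2 * k) G := by
  rw [totCycCount, ← sum_image (f := fun r => cycCount r G)
    fun _ _ _ _ h => Nat.eq_of_mul_eq_mul_left two_pos h]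
  symm
  refine sum_subset (fun r hr => ?_) fun r hr hr' => hodd r ?_ ?_
  · obtain ⟨k, hk, rfl⟩ := mem_image.1 hr
    rw [mem_Icc] at hk ⊢
    omega
  · rw [mem_Icc] at hr
    omega
  · refine Nat.not_even_iff_odd.1 fun ⟨k, hk⟩ => hr' (mem_image.2 ⟨k, ?_, by omega⟩)
    rw [mem_Icc] at hr ⊢
    omega

open Nat in
lemma mul_descFactorial_mul_factorial_le {a b k : ℕ} (hk : 1 ≤ k) (hka : k ≤ a) (hab : a ≤ b) :
    a * (b.descFactorial k * a.descFactorial k) * (a - k)! ≤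
      2 * k * (b.descFactorial a * a.descFactorial a) := by
  have hb : b.descFactorial k * (a - k)! ≤ b.descFactorial a := by
    rw [← descFactorial_mul_descFactorial hka, mul_comm, ← descFactorial_self]
    gcongr
  have ha : a.descFactorial a = (a - k)! * a.descFactorial k := by
    rw [descFactorial_self, factorial_mul_descFactorial hka]
  have hsplit : a ≤ 2 * k * (a - k)! := by
    have h1 : a - k ≤ k * (a - k)! := (self_le_factorial _).trans (Nat.le_mul_of_pos_left _ hk)
    have h2 : k ≤ k * (a - k)! := Nat.le_mul_of_pos_right _ (factorial_pos _)
    have h3 : a = k + (a - k) := by omega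
    linarith
  calc a * (b.descFactorial k * a.descFactorial k) * (a - k)!
      ≤ 2 * k * (a - k)! * (b.descFactorial k * a.descFactorial k) * (a - k)! := by gcongr
    _ = 2 * k * (b.descFactorial k * (a - k)! * ((a - k)! * a.descFactorial k)) := by ring
    _ ≤ 2 * k * (b.descFactorial a * a.descFactorial a) := by rw [ha]; gcongr

lemma two_mul_dvd_descFactorial_mul_descFactorial_self {a : ℕ} (ha : 2 ≤ a) (b : ℕ) :
    2 * a ∣ b.descFactorial a * a.descFactorial a := by
  rw [Nat.descFactorial_self]
  exact mul_dvd_mul ((Nat.dvd_factorial two_pos ha).trans (Nat.factorial_dvd_descFactorial b a))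
    (Nat.dvd_factorial (by omega) le_rfl)

lemma cycCount_turanGraph_two_le_div_factorial {n k : ℕ} (hk : 2 ≤ k) (hka : k ≤ n / 2) :
    (cycCount (2 * k) (turanGraph n 2) : ℝ) ≤
      2 / (n / 2 - k).factorial * cycCount (2 * (n / 2)) (turanGraph n 2) := by
  set a := n / 2
  set b := (n + 1) / 2
  have : NeZero k := ⟨by omega⟩
  have : NeZero a := ⟨by omega⟩
  have hk0 : (k : ℝ) ≠ 0 := by exact_mod_cast NeZero.ne k
  have ha0 : (a : ℝ) ≠ 0 := by exact_mod_cast NeZero.ne a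
  have hCk : (cycCount (2 * k) (turanGraph n 2) : ℝ) ≤
      (b.descFactorial k * a.descFactorial k : ℕ) / (2 * k) := by
    rw [cycCount, copyCnt_cycGraph_turanGraph_two_of_even]
    refine Nat.cast_div_le.trans_eq ?_
    push_cast
    field_simp
    ring
  have hCa : (cycCount (2 * a) (turanGraph n 2) : ℝ) =
      (b.descFactorial a * a.descFactorial a : ℕ) / (2 * a) := by
    rw [cycCount, copyCnt_cycGraph_turanGraph_two_of_even, Nat.cast_div
      (mul_dvd_mul_left 2 (two_mul_dvd_descFactorial_mul_descFactorial_self (by omega) b))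
      (by push_cast; positivity)]
    push_cast
    field_simp
  have key : (a * (b.descFactorial k * a.descFactorial k) * (a - k).factorial : ℝ) ≤
      2 * k * (b.descFactorial a * a.descFactorial a) := by
    exact_mod_cast mul_descFactorial_mul_factorial_le (by omega) hka (by omega)
  refine hCk.trans ?_
  rw [hCa, div_mul_div_comm, div_le_div_iff₀ (by positivity) (by positivity)]
  push_cast
  linarith

lemma sum_Icc_inv_factorial_sub_le_exp_one (m a : ℕ) :
    ∑ k ∈ Icc m a, ((a - k).factorial : ℝ)⁻¹ ≤ Real.exp 1 := by
  calc ∑ k ∈ Icc m a, ((a - k).factorial : ℝ)⁻¹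
      ≤ ∑ k ∈ range (a + 1), ((a - k).factorial : ℝ)⁻¹ :=
        sum_le_sum_of_subset_of_nonneg
          (fun k hk => by simp only [mem_Icc, mem_range] at hk ⊢; omega) fun _ _ _ => by positivity
    _ = ∑ j ∈ range (a + 1), (1 : ℝ) ^ j / j.factorial := by
        rw [← sum_range_reflect]
        refine sum_congr rfl fun j hj => ?_
        rw [mem_range] at hj
        rw [one_pow, one_div, show a - (a + 1 - 1 - j) = j by omega]
    _ ≤ Real.exp 1 := Real.sum_le_exp_of_nonneg zero_le_one _

theorem stmt1_general (n : ℕ) :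
    (totCycCount (SimpleGraph.turanGraph n 2) : ℝ) ≤
      2 * Real.exp 1 * (cycCount (2 * (n / 2)) (SimpleGraph.turanGraph n 2) : ℝ) := by
  have hodd (r : ℕ) (hr : 1 < r) (hr' : Odd r) : cycCount r (turanGraph n 2) = 0 := by
    rw [cycCount, copyCnt_cycGraph_turanGraph_two_of_odd hr hr', Nat.zero_div]
  rw [totCycCount_eq_sum_even _ hodd, Fintype.card_fin, Nat.cast_sum]
  calc ∑ k ∈ Icc 2 (n / 2), (cycCount (2 * k) (turanGraph n 2) : ℝ)
      ≤ ∑ k ∈ Icc 2 (n / 2),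
          2 / (n / 2 - k).factorial * (cycCount (2 * (n / 2)) (turanGraph n 2) : ℝ) :=
        sum_le_sum fun k hk =>
          cycCount_turanGraph_two_le_div_factorial (mem_Icc.1 hk).1 (mem_Icc.1 hk).2
    _ = 2 * (∑ k ∈ Icc 2 (n / 2), ((n / 2 - k).factorial : ℝ)⁻¹) *
          cycCount (2 * (n / 2)) (turanGraph n 2) := by
        rw [mul_sum, sum_mul]
        simp only [div_eq_mul_inv]
    _ ≤ 2 * Real.exp 1 * cycCount (2 * (n / 2)) (turanGraph n 2) := by
        gcongr
        exact sum_Icc_inv_factorial_sub_le_exp_one 2 (n / 2)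

/-- The total number of cycles in `T₂(n)` is at most `2e` times the number of
cycles of length `2⌊n/2⌋` in `T₂(n)`, for `n ≥ 4`. -/
theorem stmt1 (n : ℕ) (hn : 4 ≤ n) :
    (totCycCount (SimpleGraph.turanGraph n 2) : ℝ) ≤
      2 * Real.exp 1 * (cycCount (2 * (n / 2)) (SimpleGraph.turanGraph n 2) : ℝ) :=
  stmt1_general n
end

section
/- For k ≥ 3 and all n, i with i ≤ n, the number of Hamiltonian cycles of the Turán graph satisfies h(T_k(n)) ≥ (n-1)_i · ((k-2)/k)^i · h(T_k(n-i)), where (n-1)_i is the falling factorial. -/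
/-!
Let `h(G)` count Hamiltonian cycles via labelled cycles `ZMod n → V`: the dihedral group of order
`2n` acts freely on these, so there are exactly `2n · h(G)` of them for `n ≥ 3`. The new vertex `m`
of `T_k(m+1)` lies in a class that meets `T_k(m)` in `⌊m/k⌋` vertices, so in any labelled Hamiltonian
cycle of `T_k(m)` at least `m - 2⌊m/k⌋ ≥ m(k-2)/k` of the `m` edges join two neighbours of `m`.
Inserting `m` into such an edge, and rotating the result, gives
`h(T_k(m+1)) ≥ m (k-2)/k · h(T_k(m))`; iterating `i` times yields the bound.
-/

open SimpleGraph Finset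

open Function

variable {V W : Type*}

namespace ZMod
variable {m : ℕ}

lemma val_lt_of_ne_neg_one {x : ZMod (m + 1)} (hx : x ≠ -1) : x.val < m := by
  have : x.val ≠ (-1 : ZMod (m + 1)).val := fun h => hx (val_injective _ h)
  have := x.val_lt
  rw [val_neg_one] at *
  omega

lemma val_add_one_of_ne_neg_one {x : ZMod (m + 1)} (hx : x ≠ -1) : (x + 1).val = x.val + 1 := by
  have hlt := val_lt_of_ne_neg_one hx
  rw [val_add, val_one'' (by omega), Nat.mod_eq_of_lt (by omega)]

lemma natCast_val_add_one_of_ne_neg_one [NeZero m] {x : ZMod (m + 1)} (hx : x ≠ -1) :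
    ((x + 1).val : ZMod m) = (x.val : ZMod m) + 1 := by
  rw [val_add_one_of_ne_neg_one hx, Nat.cast_succ]

lemma natCast_val_neg_one : (((-1 : ZMod (m + 1)).val : ℕ) : ZMod m) = 0 := by
  rw [val_neg_one, natCast_self]

lemma eq_of_natCast_val_eq {x y : ZMod (m + 1)} (hx : x ≠ -1) (hy : y ≠ -1)
    (h : (x.val : ZMod m) = (y.val : ZMod m)) : x = y := by
  have := congrArg val h
  rw [val_cast_of_lt (val_lt_of_ne_neg_one hx), val_cast_of_lt (val_lt_of_ne_neg_one hy)] at this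
  exact val_injective _ this

lemma natCast_val_ne_neg_one [NeZero m] (a : ZMod m) : ((a.val : ℕ) : ZMod (m + 1)) ≠ -1 := by
  intro h
  have := congrArg val h
  rw [val_neg_one, val_cast_of_lt (by have := a.val_lt; omega)] at this
  exact (a.val_lt).ne this

lemma natCast_val_natCast_val [NeZero m] (a : ZMod m) :
    ((((a.val : ℕ) : ZMod (m + 1)).val : ℕ) : ZMod m) = a := by
  rw [val_cast_of_lt (by have := a.val_lt; omega), natCast_zmod_val]

end ZMod

def IsLabelledCycle (G : SimpleGraph V) {n : ℕ} (f : ZMod n → V) : Prop :=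
  Injective f ∧ ∀ j, G.Adj (f j) (f (j + 1))

lemma cycGraph_adj {n : ℕ} {a b : ZMod n} :
    (cycGraph n).Adj a b ↔ a ≠ b ∧ (a = b + 1 ∨ b = a + 1) :=
  SimpleGraph.fromRel_adj _ _ _

lemma isCopy_cycGraph_iff {n : ℕ} [Nontrivial (ZMod n)] (G : SimpleGraph V) (f : ZMod n → V) :
    (Injective f ∧ ∀ a b, (cycGraph n).Adj a b → G.Adj (f a) (f b)) ↔
      IsLabelledCycle G f := by
  refine and_congr_right fun _ => ⟨fun h j => h _ _ (cycGraph_adj.2 ⟨?_, .inr rfl⟩), ?_⟩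
  · simp
  · rintro h a b ⟨-, rfl | rfl⟩
    exacts [(h b).symm, h a]

lemma copyCnt_cycGraph {n : ℕ} [Nontrivial (ZMod n)] (G : SimpleGraph V) :
    copyCnt (cycGraph n) G = Nat.card {f : ZMod n → V // IsLabelledCycle G f} :=
  Nat.card_congr (Equiv.subtypeEquivRight (isCopy_cycGraph_iff G))

lemma IsLabelledCycle.comp_add_right {G : SimpleGraph V} {n : ℕ} {f : ZMod n → V}
    (hf : IsLabelledCycle G f) (c : ZMod n) : IsLabelledCycle G (fun x => f (x + c)) :=
  ⟨hf.1.comp (add_left_injective c), fun x => by simpa only [add_right_comm] using hf.2 (x + c)⟩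

namespace DihedralGroup

variable {n : ℕ}

-- `r i` rotates the `n`-cycle `ZMod n` and `sr i` reflects it, with signs matching Mathlib's
-- multiplication rule `r i * sr j = sr (j - i)`.
instance : SMul (DihedralGroup n) (ZMod n) where
  smul
    | r i, x => i + x
    | sr i, x => -i - x

@[simp] lemma r_smul (i x : ZMod n) : r i • x = i + x := rfl
@[simp] lemma sr_smul (i x : ZMod n) : sr i • x = -i - x := rfl

instance : MulAction (DihedralGroup n) (ZMod n) where
  one_smul := zero_add
  mul_smul := by
    rintro (a | a) (b | b) x <;>
      simp only [r_mul_r, r_mul_sr, sr_mul_r, sr_mul_sr, r_smul, sr_smul] <;> ring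

lemma smul_add_one_eq_or (g : DihedralGroup n) (x : ZMod n) :
    g • (x + 1) = g • x + 1 ∨ g • x = g • (x + 1) + 1 := by
  rcases g with i | i
  · left; simp only [r_smul]; ring
  · right; simp only [sr_smul]; ring

lemma faithfulSMul_zmod (hn : 3 ≤ n) : FaithfulSMul (DihedralGroup n) (ZMod n) := by
  have htwo : (2 : ZMod n) ≠ 0 := by
    intro h
    have := (ZMod.natCast_eq_zero_iff 2 n).1 (by exact_mod_cast h)
    have := Nat.le_of_dvd two_pos this
    omega
  refine ⟨fun {g₁ g₂} h => ?_⟩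
  rcases g₁ with i | i <;> rcases g₂ with j | j <;> have h0 := h 0 <;> have h1 := h 1 <;>
    simp only [r_smul, sr_smul] at h0 h1
  · simpa using h0
  · exact absurd (by linear_combination h1 - h0) htwo
  · exact absurd (by linear_combination h0 - h1) htwo
  · simpa using h0

end DihedralGroup

section LabelledCycles

attribute [local instance] arrowAction

variable (G : SimpleGraph V) (n : ℕ)

def labelledCycles : SubMulAction (DihedralGroup n) (ZMod n → V) where
  carrier := {f | IsLabelledCycle G f}
  smul_mem' g f hf := by
    refine ⟨hf.1.comp (MulAction.injective g⁻¹), fun x => ?_⟩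
    change G.Adj (f (g⁻¹ • x)) (f (g⁻¹ • (x + 1)))
    rcases DihedralGroup.smul_add_one_eq_or g⁻¹ x with h | h
    · exact h ▸ hf.2 (g⁻¹ • x)
    · exact h ▸ (hf.2 (g⁻¹ • (x + 1))).symm

variable {G n}

lemma labelledCycles_smul_apply (g : DihedralGroup n) (f : labelledCycles G n) (x : ZMod n) :
    (g • f : labelledCycles G n).1 x = f.1 (g⁻¹ • x) := rfl

lemma stabilizer_labelledCycles_eq_bot (hn : 3 ≤ n) (f : labelledCycles G n) :
    MulAction.stabilizer (DihedralGroup n) f = ⊥ := by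
  have := DihedralGroup.faithfulSMul_zmod hn
  refine Subgroup.eq_bot_iff_forall _ |>.2 fun g hg => ?_
  have hfix : ∀ x : ZMod n, g⁻¹ • x = (1 : DihedralGroup n) • x := fun x =>
    f.2.1 (by rw [one_smul, ← labelledCycles_smul_apply, MulAction.mem_stabilizer_iff.1 hg])
  simpa using eq_of_smul_eq_smul hfix

lemma two_mul_dvd_card_labelledCycles (hn : 3 ≤ n) : 2 * n ∣ Nat.card (labelledCycles G n) := by
  rw [Nat.card_congr (MulAction.selfEquivOrbitsQuotientProd (stabilizer_labelledCycles_eq_bot hn)),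
    Nat.card_prod, DihedralGroup.nat_card]
  exact dvd_mul_left _ _

end LabelledCycles

section Insertion

variable {m : ℕ} (e : W ↪ V) (v : V)

/-- The `m`-cycle `f` with `v` inserted between `f (-1)` and `f 0`: positions `0, …, m - 1` of
`ZMod (m + 1)` carry `f` and position `m = -1` carries `v`. -/
def insertVertex (f : ZMod m → W) (x : ZMod (m + 1)) : V :=
  if x = -1 then v else e (f x.val)

variable {e v}

lemma isLabelledCycle_insertVertex [NeZero m] {G : SimpleGraph V} {f : ZMod m → W}
    (hv : ∀ w, e w ≠ v) (hf : IsLabelledCycle (G.comap e) f) (hlast : G.Adj v (e (f (-1))))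
    (hfirst : G.Adj v (e (f 0))) : IsLabelledCycle G (insertVertex e v f) := by
  refine ⟨fun x y hxy => ?_, fun x => ?_⟩
  · by_cases hx : x = -1 <;> by_cases hy : y = -1 <;>
      simp only [insertVertex, hx, hy, if_true, if_false] at hxy
    · rw [hx, hy]
    · exact absurd hxy.symm (hv _)
    · exact absurd hxy (hv _)
    · exact ZMod.eq_of_natCast_val_eq hx hy (hf.1 (e.injective hxy))
  by_cases hx : x = -1
  · have : (0 : ZMod (m + 1)) ≠ -1 := by simpa using ZMod.natCast_val_ne_neg_one (0 : ZMod m)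
    simpa [insertVertex, hx, this] using hfirst
  have hsucc := ZMod.natCast_val_add_one_of_ne_neg_one hx
  by_cases hx1 : x + 1 = -1
  · rw [hx1, ZMod.natCast_val_neg_one, eq_comm, ← eq_neg_iff_add_eq_zero] at hsucc
    simpa [insertVertex, hx, hx1, hsucc] using hlast.symm
  · simp only [insertVertex, hx, hx1, if_false, hsucc]
    exact hf.2 _

lemma insertVertex_natCast_val [NeZero m] (f : ZMod m → W) (a : ZMod m) :
    insertVertex e v f (a.val : ZMod (m + 1)) = e (f a) := by
  rw [insertVertex, if_neg (ZMod.natCast_val_ne_neg_one a), ZMod.natCast_val_natCast_val]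

lemma insertVertex_neg_one (f : ZMod m → W) : insertVertex e v f (-1) = v := if_pos rfl

lemma insertVertex_eq_iff (hv : ∀ w, e w ≠ v) {f : ZMod m → W} {x : ZMod (m + 1)} :
    insertVertex e v f x = v ↔ x = -1 := by
  by_cases hx : x = -1 <;> simp [insertVertex, hx, hv]

lemma succ_mul_card_le_card_labelledCycles [NeZero m] [Finite V] {G : SimpleGraph V}
    (hv : ∀ w, e w ≠ v) :
    (m + 1) * Nat.card {f : ZMod m → W //
        IsLabelledCycle (G.comap e) f ∧ G.Adj v (e (f (-1))) ∧ G.Adj v (e (f 0))} ≤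
      Nat.card (labelledCycles G (m + 1)) := by
  let ins (f : {f : ZMod m → W //
      IsLabelledCycle (G.comap e) f ∧ G.Adj v (e (f (-1))) ∧ G.Adj v (e (f 0))}) :
      labelledCycles G (m + 1) :=
    ⟨insertVertex e v f.1, isLabelledCycle_insertVertex hv f.2.1 f.2.2.1 f.2.2.2⟩
  have hinj : Injective fun pf : ZMod (m + 1) × _ => DihedralGroup.r pf.1 • ins pf.2 := by
    rintro ⟨p, f⟩ ⟨q, g⟩ h
    -- `r p • ins f` carries `v` exactly at position `p - 1`
    obtain rfl : p = q := by
      have := congrArg (fun c : labelledCycles G (m + 1) => c.1 (p - 1)) h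
      simp only [labelledCycles_smul_apply, DihedralGroup.inv_r, DihedralGroup.r_smul, ins] at this
      rw [neg_add_eq_sub, sub_sub_cancel_left, insertVertex_neg_one, eq_comm,
        insertVertex_eq_iff hv] at this
      linear_combination this
    have hfg : ins f = ins g := MulAction.injective (DihedralGroup.r p) h
    refine Prod.ext rfl (Subtype.ext (funext fun a => e.injective ?_))
    rw [← insertVertex_natCast_val, ← insertVertex_natCast_val]
    exact congrArg (fun c : labelledCycles G (m + 1) => c.1 (a.val : ZMod (m + 1))) hfg
  simpa using Nat.card_le_card_of_injective _ hinj

end Insertion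

section Averaging

variable [Fintype W] {m : ℕ} (P : W → Prop) [DecidablePred P]

lemma le_card_filter_and_add_one [NeZero m] {f : ZMod m → W} (hf : Injective f) :
    m ≤ #{j | P (f j) ∧ P (f (j + 1))} + 2 * #{w | ¬ P w} := by
  have hbad : #{j | ¬ (P (f j) ∧ P (f (j + 1)))} ≤ 2 * #{w | ¬ P w} := by
    have h₀ : #{j | ¬ P (f j)} ≤ #{w | ¬ P w} :=
      card_le_card_of_injOn f (by simp [Set.MapsTo]) hf.injOn
    have h₁ : #{j | ¬ P (f (j + 1))} ≤ #{w | ¬ P w} :=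
      card_le_card_of_injOn (fun j => f (j + 1)) (by simp [Set.MapsTo])
        (hf.comp (add_left_injective 1)).injOn
    calc #{j | ¬ (P (f j) ∧ P (f (j + 1)))}
        = #(univ.filter (fun j => ¬ P (f j)) ∪ univ.filter (fun j => ¬ P (f (j + 1)))) := by
          rw [← filter_or]; simp only [not_and_or]
      _ ≤ _ := (card_union_le _ _).trans (by omega)
  have := card_filter_add_card_filter_not (s := (univ : Finset (ZMod m)))
    (fun j => P (f j) ∧ P (f (j + 1)))
  rw [card_univ, ZMod.card] at this
  omega

open Classical in
lemma card_filter_and_add_one_eq [NeZero m] (G : SimpleGraph W) (j : ZMod m) :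
    #{f : ZMod m → W | IsLabelledCycle G f ∧ P (f j) ∧ P (f (j + 1))} =
      #{f : ZMod m → W | IsLabelledCycle G f ∧ P (f (-1)) ∧ P (f 0)} := by
  refine card_nbij' (fun f x => f (x + (j + 1))) (fun f x => f (x - (j + 1))) ?_ ?_ ?_ ?_
  · intro f hf
    simp only [coe_filter, mem_univ, true_and, Set.mem_ofPred_eq] at hf ⊢
    refine ⟨hf.1.comp_add_right _, ?_⟩
    simpa [add_comm j 1] using hf.2
  · intro f hf
    simp only [coe_filter, mem_univ, true_and, Set.mem_ofPred_eq] at hf ⊢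
    refine ⟨by simpa [sub_eq_add_neg] using hf.1.comp_add_right (-(j + 1)), ?_⟩
    simpa using hf.2
  · intro f _; simp
  · intro f _; simp

open Classical in
lemma mul_card_isLabelledCycle_le [NeZero m] (G : SimpleGraph W) :
    m * Nat.card {f : ZMod m → W // IsLabelledCycle G f} ≤
      m * Nat.card {f : ZMod m → W // IsLabelledCycle G f ∧ P (f (-1)) ∧ P (f 0)} +
        2 * #{w | ¬ P w} * Nat.card {f : ZMod m → W // IsLabelledCycle G f} := by
  simp only [Nat.card_eq_fintype_card, Fintype.card_subtype]
  set C : Finset (ZMod m → W) := {f | IsLabelledCycle G f}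
  have hdouble : ∑ f ∈ C, #{j | P (f j) ∧ P (f (j + 1))} =
      m * #{f : ZMod m → W | IsLabelledCycle G f ∧ P (f (-1)) ∧ P (f 0)} := by
    calc ∑ f ∈ C, #{j | P (f j) ∧ P (f (j + 1))}
        = ∑ j : ZMod m, #{f ∈ C | P (f j) ∧ P (f (j + 1))} :=
          sum_card_bipartiteAbove_eq_sum_card_bipartiteBelow
            (fun (f : ZMod m → W) (j : ZMod m) => P (f j) ∧ P (f (j + 1)))
      _ = ∑ j : ZMod m, #{f : ZMod m → W | IsLabelledCycle G f ∧ P (f (-1)) ∧ P (f 0)} :=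
          sum_congr rfl fun j _ => by rw [filter_filter, card_filter_and_add_one_eq]
      _ = _ := by rw [sum_const, card_univ, ZMod.card, smul_eq_mul]
  calc m * #C = ∑ f ∈ C, m := by rw [sum_const, smul_eq_mul, mul_comm]
    _ ≤ ∑ f ∈ C, (#{j | P (f j) ∧ P (f (j + 1))} + 2 * #{w | ¬ P w}) :=
        sum_le_sum fun f hf => le_card_filter_and_add_one P (mem_filter.1 hf).2.1
    _ = _ := by rw [sum_add_distrib, hdouble, sum_const, smul_eq_mul, mul_comm #C]

end Averaging

lemma hamCnt_eq_zero_of_card_le_one [Fintype V] (G : SimpleGraph V) (h : Fintype.card V ≤ 1) :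
    hamCnt G = 0 := by
  have : Subsingleton V := Fintype.card_le_one_iff_subsingleton.1 h
  have : copyCnt (cycGraph (Fintype.card V)) G ≤ 1 :=
    Finite.card_le_one_iff_subsingleton.2 inferInstance
  rw [hamCnt, cycCount, Nat.div_eq_zero_iff]
  omega

lemma hamCnt_eq_card_labelledCycles_div {n : ℕ} [Nontrivial (ZMod n)] (G : SimpleGraph (Fin n)) :
    hamCnt G = Nat.card (labelledCycles G n) / (2 * n) := by
  rw [hamCnt, Fintype.card_fin, cycCount, copyCnt_cycGraph]
  rfl

lemma card_filter_fin_mod_eq_le (m k : ℕ) : #{v : Fin m | v % k = m % k} ≤ m / k := by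
  calc #{v : Fin m | v % k = m % k} ≤ #(range (m / k)) := by
        refine card_le_card_of_injOn (fun v => v / k) (fun v hv => ?_) (fun v hv w hw h => ?_)
        · simp only [coe_filter, mem_univ, true_and, Set.mem_ofPred_eq, coe_range,
            Set.mem_Iio] at hv ⊢
          have := Nat.div_add_mod v k
          have := Nat.div_add_mod m k
          exact Nat.lt_of_mul_lt_mul_left (a := k) (by linarith [v.is_lt])
        · simp only [coe_filter, mem_univ, true_and, Set.mem_ofPred_eq] at hv hw
          rw [Fin.ext_iff, ← Nat.div_add_mod v k, ← Nat.div_add_mod w k, hv, hw]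
          exact congrArg (k * · + m % k) h
    _ = m / k := card_range _

lemma mul_card_labelledCycles_turanGraph_le (k m : ℕ) [NeZero m] (hk : 0 < k) :
    ((m : ℝ) + 1) * ((k : ℝ) - 2) * Nat.card (labelledCycles (turanGraph m k) m) ≤
      k * Nat.card (labelledCycles (turanGraph (m + 1) k) (m + 1)) := by
  set A := Nat.card (labelledCycles (turanGraph m k) m)
  set A' := Nat.card (labelledCycles (turanGraph (m + 1) k) (m + 1))
  set B := Nat.card {f : ZMod m → Fin m // IsLabelledCycle (turanGraph m k) f ∧
    (turanGraph (m + 1) k).Adj (Fin.last m) (Fin.castSuccEmb (f (-1))) ∧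
    (turanGraph (m + 1) k).Adj (Fin.last m) (Fin.castSuccEmb (f 0))}
  set b := #{w : Fin m | ¬ (turanGraph (m + 1) k).Adj (Fin.last m) (Fin.castSuccEmb w)}
  have hins : (m + 1) * B ≤ A' :=
    succ_mul_card_le_card_labelledCycles (G := turanGraph (m + 1) k) (e := Fin.castSuccEmb)
      (v := Fin.last m) Fin.castSucc_ne_last
  have havg : m * A ≤ m * B + 2 * b * A :=
    mul_card_isLabelledCycle_le
      (fun w => (turanGraph (m + 1) k).Adj (Fin.last m) (Fin.castSuccEmb w)) (turanGraph m k)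
  have hb : (b : ℝ) * k ≤ m := by
    have : b ≤ m / k := by
      simpa [b, turanGraph_adj, eq_comm] using card_filter_fin_mod_eq_le m k
    rw [← le_div_iff₀ (by positivity)]
    exact (Nat.cast_le.2 this).trans Nat.cast_div_le
  have hm0 : (0 : ℝ) < m := by simpa using NeZero.pos m
  have hkey : ((k : ℝ) - 2) * A ≤ k * B := by
    have havg' : (m : ℝ) * A ≤ m * B + 2 * b * A := by exact_mod_cast havg
    nlinarith [mul_le_mul_of_nonneg_right hb (Nat.cast_nonneg (α := ℝ) A)]
  have hins' : ((m : ℝ) + 1) * B ≤ A' := by exact_mod_cast hins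
  nlinarith [(Nat.cast_nonneg (α := ℝ) k)]

lemma mul_hamCnt_turanGraph_le_hamCnt_succ (k m : ℕ) (hk : 2 ≤ k) :
    (m : ℝ) * (((k : ℝ) - 2) / k) * hamCnt (turanGraph m k) ≤
      hamCnt (turanGraph (m + 1) k) := by
  rcases le_or_gt m 1 with hm | hm
  · rw [hamCnt_eq_zero_of_card_le_one _ (by simpa using hm)]
    simp
  have : NeZero m := ⟨by omega⟩
  have : Fact (1 < m) := ⟨hm⟩
  have : Fact (1 < m + 1) := ⟨by omega⟩
  set A := Nat.card (labelledCycles (turanGraph m k) m)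
  set A' := Nat.card (labelledCycles (turanGraph (m + 1) k) (m + 1))
  have hcount : ((m : ℝ) + 1) * (k - 2) * A ≤ k * A' :=
    mul_card_labelledCycles_turanGraph_le k m (by omega)
  have hdvd : 2 * (m + 1) ∣ A' := two_mul_dvd_card_labelledCycles (by omega)
  have hk0 : (0 : ℝ) < k := by positivity
  have hq : 0 ≤ ((k : ℝ) - 2) / k := div_nonneg (sub_nonneg.2 (by exact_mod_cast hk)) hk0.le
  rw [hamCnt_eq_card_labelledCycles_div, hamCnt_eq_card_labelledCycles_div,
    Nat.cast_div hdvd (by positivity)]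
  calc (m : ℝ) * ((k - 2) / k) * ((A / (2 * m) : ℕ) : ℝ)
      ≤ m * ((k - 2) / k) * (A / (2 * m)) := by
        gcongr
        exact_mod_cast Nat.cast_div_le
    _ = (m + 1) * (k - 2) * A / k / (2 * (m + 1)) := by field_simp
    _ ≤ A' / ((2 * (m + 1) : ℕ) : ℝ) := by
        push_cast
        gcongr
        rwa [div_le_iff₀ hk0, mul_comm _ (k : ℝ)]

/-- For `k ≥ 3` and `i ≤ n`, `h(T_k(n)) ≥ (n-1)_i ((k-2)/k)^i h(T_k(n-i))`. -/
theorem stmt3 (k n i : ℕ) (hk : 3 ≤ k) (hi : i ≤ n) :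
    ((n - 1).descFactorial i : ℝ) * (((k : ℝ) - 2) / k) ^ i *
        (hamCnt (SimpleGraph.turanGraph (n - i) k) : ℝ) ≤
      (hamCnt (SimpleGraph.turanGraph n k) : ℝ) := by
  set q : ℝ := ((k : ℝ) - 2) / k
  have hq : 0 ≤ q :=
    div_nonneg (sub_nonneg.2 (by exact_mod_cast (by omega : 2 ≤ k))) k.cast_nonneg
  induction i with
  | zero => simp
  | succ i ih =>
    have hstep := mul_hamCnt_turanGraph_le_hamCnt_succ k (n - (i + 1)) (by omega)
    rw [show n - (i + 1) + 1 = n - i by omega] at hstep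
    calc ((n - 1).descFactorial (i + 1) : ℝ) * q ^ (i + 1) * hamCnt (turanGraph (n - (i + 1)) k)
        = (n - 1).descFactorial i * q ^ i *
            ((n - (i + 1) : ℕ) * q * hamCnt (turanGraph (n - (i + 1)) k)) := by
          rw [Nat.descFactorial_succ, show n - 1 - i = n - (i + 1) by omega]
          push_cast
          ring
      _ ≤ (n - 1).descFactorial i * q ^ i * hamCnt (turanGraph (n - i) k) := by gcongr
      _ ≤ hamCnt (turanGraph n k) := ih (by omega)
end

section
/- Let H be a graph with χ(H) ≥ 3, let G be an H-free graph on n vertices with m edges, and let x, y be vertices of G. Then the number of paths from x to y in G is at most the maximum of ∏_{i=2}^{n} max{r_i, 1} over all sequences (r_2, …, r_n) of nonnegative integers satisfying ∑_{i=2}^{n} r_i ≤ m and, for every 2 ≤ t ≤ n, ∑_{i=2}^{t} r_i ≤ ex(t; H), where ex(t; H) is the maximum number of edges of a t-vertex H-free graph. -/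
open SimpleGraph Finset

/-- The number of simple paths between `x` and `y` in `G`. -/
noncomputable def pathCnt {V : Type*} (G : SimpleGraph V) (x y : V) : ℕ :=
  Nat.card {p : G.Walk x y // p.IsPath}

/-- The number of edges of `G`. -/
noncomputable def edgeCnt {V : Type*} (G : SimpleGraph V) : ℕ := Nat.card G.edgeSet

/-- The Turán extremal number `ex(t; H)`: the maximum number of edges of a
`t`-vertex `H`-free graph. -/
noncomputable def exNum {α : Type*} (t : ℕ) (H : SimpleGraph α) : ℕ :=
  sSup {m | ∃ G : SimpleGraph (Fin t), Freeof H G ∧ edgeCnt G = m}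

/-!
Every path from `x` to `y ≠ x` is an edge `xz` followed by a path from `z` to `y` in `G - x`,
so `p_{x,y}(G) ≤ deg(x) · max_z p_{z,y}(G - x)`. The graph `G - x` is again `H`-free, has `n - 1`
vertices and `m - deg(x)` edges, so induction on `n` gives an admissible sequence for `G - x`,
which we extend by `r_n := deg(x)`; the new constraint at `t = n` is `m ≤ ex(n; H)`, true because
`G` itself is `H`-free.
-/

def admissibleProducts (ex : ℕ → ℕ) (n m : ℕ) : Set ℕ :=
  {P | ∃ r : ℕ → ℕ, (∑ i ∈ Icc 2 n, r i ≤ m) ∧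
    (∀ t, 2 ≤ t → t ≤ n → ∑ i ∈ Icc 2 t, r i ≤ ex t) ∧
    P = ∏ i ∈ Icc 2 n, max (r i) 1}

noncomputable def maxAdmissibleProduct (ex : ℕ → ℕ) (n m : ℕ) : ℕ :=
  sSup (admissibleProducts ex n m)

section AdmissibleProducts

variable {ex : ℕ → ℕ} {n m : ℕ}

theorem bddAbove_admissibleProducts : BddAbove (admissibleProducts ex n m) := by
  refine ⟨(m + 1) ^ #(Icc 2 n), ?_⟩
  rintro _ ⟨r, hr, -, rfl⟩
  refine prod_le_pow_card _ _ _ fun i hi ↦ max_le ?_ (by omega)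
  exact (single_le_sum (fun _ _ ↦ Nat.zero_le _) hi).trans hr |>.trans (Nat.le_succ m)

theorem prod_le_maxAdmissibleProduct {r : ℕ → ℕ} (hr : ∑ i ∈ Icc 2 n, r i ≤ m)
    (hex : ∀ t, 2 ≤ t → t ≤ n → ∑ i ∈ Icc 2 t, r i ≤ ex t) :
    ∏ i ∈ Icc 2 n, max (r i) 1 ≤ maxAdmissibleProduct ex n m :=
  le_csSup bddAbove_admissibleProducts ⟨r, hr, hex, rfl⟩

theorem one_le_maxAdmissibleProduct : 1 ≤ maxAdmissibleProduct ex n m := by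
  simpa using
    prod_le_maxAdmissibleProduct (ex := ex) (n := n) (m := m) (r := 0) (by simp) (by simp)

theorem maxAdmissibleProduct_mem_admissibleProducts :
    maxAdmissibleProduct ex n m ∈ admissibleProducts ex n m :=
  Nat.sSup_mem ⟨1, 0, by simp, by simp, by simp⟩ bddAbove_admissibleProducts

theorem mul_le_maxAdmissibleProduct_succ {d m' : ℕ} (hn : 1 ≤ n) (hm : m' + d ≤ m)
    (hex : m ≤ ex (n + 1)) :
    d * maxAdmissibleProduct ex n m' ≤ maxAdmissibleProduct ex (n + 1) m := by
  obtain ⟨r, hr, hrex, hP⟩ :=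
    maxAdmissibleProduct_mem_admissibleProducts (ex := ex) (n := n) (m := m')
  have hnot : ∀ t ≤ n, n + 1 ∉ Icc 2 t := fun t ht h ↦ by simp at h; omega
  set r' := Function.update r (n + 1) d
  have hr'_top : r' (n + 1) = d := Function.update_self ..
  have hsum : ∀ t ≤ n, ∑ i ∈ Icc 2 t, r' i = ∑ i ∈ Icc 2 t, r i := fun t ht ↦
    sum_update_of_notMem (hnot t ht) _ _
  have hr' : ∑ i ∈ Icc 2 (n + 1), r' i ≤ m := by
    rw [sum_Icc_succ_top (by omega), hsum n le_rfl, hr'_top]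
    omega
  calc d * maxAdmissibleProduct ex n m'
      ≤ (∏ i ∈ Icc 2 n, max (r i) 1) * max d 1 := by
        rw [hP, mul_comm]; gcongr; exact le_max_left _ _
    _ = ∏ i ∈ Icc 2 (n + 1), max (r' i) 1 := by
      rw [prod_Icc_succ_top (by omega), hr'_top]
      congr 1
      refine prod_congr rfl fun i hi ↦ ?_
      exact congrArg (max · 1)
        (Function.update_of_ne (ne_of_mem_of_not_mem hi (hnot n le_rfl)) ..).symm
    _ ≤ maxAdmissibleProduct ex (n + 1) m := by
      refine prod_le_maxAdmissibleProduct hr' fun t ht htn ↦ ?_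
      rcases htn.lt_or_eq with htn | rfl
      · rw [hsum t (by omega)]
        exact hrex t ht (by omega)
      · exact hr'.trans hex

end AdmissibleProducts

namespace SimpleGraph

variable {α V : Type*} {H : SimpleGraph α} {G : SimpleGraph V}

theorem freeof_iff_free : Freeof H G ↔ H.Free G :=
  not_congr ⟨fun ⟨f, hf, hadj⟩ ↦ ⟨⟨⟨f, hadj _ _⟩, hf⟩⟩,
    fun ⟨c⟩ ↦ ⟨c, c.injective, fun _ _ h ↦ c.toHom.map_adj h⟩⟩

theorem edgeCnt_eq_card_edgeFinset [Fintype V] [DecidableRel G.Adj] :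
    edgeCnt G = #G.edgeFinset := by
  rw [edgeCnt, Nat.card_eq_fintype_card, card_edgeSet]

theorem exNum_eq_extremalNumber (t : ℕ) : exNum t H = extremalNumber t H := by
  classical
  have hub : extremalNumber t H ∈
      upperBounds {m | ∃ G : SimpleGraph (Fin t), Freeof H G ∧ edgeCnt G = m} := by
    rintro _ ⟨G, hG, rfl⟩
    simpa [edgeCnt_eq_card_edgeFinset] using
      card_edgeFinset_le_extremalNumber (freeof_iff_free.mp hG)
  refine le_antisymm (csSup_le' hub) (Finset.sup_le fun G hG ↦ ?_)
  exact le_csSup ⟨_, hub⟩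
    ⟨G, freeof_iff_free.mpr (by simpa using hG), edgeCnt_eq_card_edgeFinset⟩

theorem Free.induce (hG : H.Free G) (s : Set V) : H.Free (G.induce s) :=
  fun h ↦ hG (h.trans (Copy.induce G s).isContained)

theorem card_edgeFinset_induce_compl_singleton_add_degree [Fintype V] [DecidableEq V]
    [DecidableRel G.Adj] (x : V) :
    #(G.induce {x}ᶜ).edgeFinset + G.degree x = #G.edgeFinset := by
  rw [card_edgeFinset_induce_compl_singleton, card_edgeFinset_deleteIncidenceSet]
  exact Nat.sub_add_cancel (G.degree_le_card_edgeFinset x)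

theorem pathCnt_self (x : V) : pathCnt G x x = 1 :=
  Nat.card_eq_one_iff_exists.mpr
    ⟨⟨.nil, .nil⟩, fun p ↦ Subtype.ext (Walk.eq_nil_iff_nil.mpr (Walk.isPath_iff_nil.mp p.2))⟩

theorem pathCnt_le_degree_mul [Fintype V] [DecidableRel G.Adj] {x y : V} (hxy : x ≠ y) {B : ℕ}
    (hB : ∀ z (hz : G.Adj x z), pathCnt (G.induce {x}ᶜ) ⟨z, hz.ne'⟩ ⟨y, hxy.symm⟩ ≤ B) :
    pathCnt G x y ≤ G.degree x * B := by
  classical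
  let Split := Σ z : G.neighborSet x,
    {q : (G.induce {x}ᶜ).Walk ⟨z, z.2.ne'⟩ ⟨y, hxy.symm⟩ // q.IsPath}
  let split (p : {p : G.Walk x y // p.IsPath}) : Split :=
    have hnil := Walk.not_nil_of_ne (p := p.1) hxy
    have hp := (Walk.cons_isPath_iff _ _).mp ((p.1.cons_tail_eq hnil).symm ▸ p.2)
    ⟨⟨_, p.1.adj_snd hnil⟩, p.1.tail.induce {x}ᶜ (fun _ hw hwx ↦ hp.2 (hwx ▸ hw)),
      .of_map (f := (Embedding.induce _).toHom) (by rw [Walk.map_induce]; exact hp.1)⟩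
  let join (q : Split) : G.Walk x y := .cons q.1.2 (q.2.1.map (Embedding.induce _).toHom)
  have hjoin (p) : join (split p) = p.1 := by
    simp only [join, split, Walk.map_induce]
    exact p.1.cons_tail_eq (Walk.not_nil_of_ne hxy)
  have hsplit : Function.Injective split := fun p p' h ↦
    Subtype.ext ((hjoin p).symm.trans (h ▸ hjoin p'))
  calc pathCnt G x y ≤ Nat.card Split := Nat.card_le_card_of_injective split hsplit
    _ = ∑ z : G.neighborSet x, pathCnt (G.induce {x}ᶜ) ⟨z, z.2.ne'⟩ ⟨y, hxy.symm⟩ :=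
      Nat.card_sigma
    _ ≤ ∑ _z : G.neighborSet x, B := sum_le_sum fun z _ ↦ hB z z.2
    _ = G.degree x * B := by
      rw [sum_const, card_univ, card_neighborSet_eq_degree, smul_eq_mul]

theorem pathCnt_le_maxAdmissibleProduct [Fintype V] [DecidableRel G.Adj] (hG : H.Free G) (x y : V) :
    pathCnt G x y ≤
      maxAdmissibleProduct (extremalNumber · H) (Fintype.card V) #G.edgeFinset := by
  obtain ⟨n, hn⟩ : ∃ n, Fintype.card V = n := ⟨_, rfl⟩
  induction n generalizing V with
  | zero => exact (Fintype.card_eq_zero_iff.mp hn).elim x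
  | succ n ih =>
    obtain rfl | hxy := eq_or_ne x y
    · rw [pathCnt_self]
      exact one_le_maxAdmissibleProduct
    classical
    have hcard : Fintype.card ({x}ᶜ : Set V) = n := by
      rw [Fintype.card_compl_set, hn, Set.card_singleton, Nat.add_sub_cancel]
    have hn1 : 1 ≤ n := by
      have := Fintype.one_lt_card_iff_nontrivial.mpr ⟨x, y, hxy⟩
      omega
    rw [hn]
    calc pathCnt G x y
        ≤ G.degree x * maxAdmissibleProduct (extremalNumber · H) n
            #(G.induce {x}ᶜ).edgeFinset :=
          pathCnt_le_degree_mul hxy fun z _ ↦ hcard ▸ ih (hG.induce _) _ _ hcard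
      _ ≤ _ := mul_le_maxAdmissibleProduct_succ hn1
          (card_edgeFinset_induce_compl_singleton_add_degree x).le
          (hn ▸ card_edgeFinset_le_extremalNumber hG)

end SimpleGraph

theorem stmt9_general {α V : Type*} [Fintype V] (H : SimpleGraph α)
    (G : SimpleGraph V) (n m : ℕ)
    (hn : Fintype.card V = n) (hm : edgeCnt G = m) (hfree : Freeof H G) (x y : V) :
    pathCnt G x y ≤
      sSup {P | ∃ r : ℕ → ℕ, (∑ i ∈ Finset.Icc 2 n, r i ≤ m) ∧
        (∀ t, 2 ≤ t → t ≤ n → ∑ i ∈ Finset.Icc 2 t, r i ≤ exNum t H) ∧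
        P = ∏ i ∈ Finset.Icc 2 n, max (r i) 1} := by
  classical
  have hex : (extremalNumber · H) = (exNum · H) :=
    funext fun t ↦ (exNum_eq_extremalNumber t).symm
  have key := pathCnt_le_maxAdmissibleProduct (freeof_iff_free.mp hfree) x y
  rwa [hex, ← edgeCnt_eq_card_edgeFinset, hn, hm] at key

/-- If `χ(H) ≥ 3` and `G` is an `H`-free graph on `n` vertices with `m` edges, then
`p_{x,y}(G)` is at most the maximum of `∏_{i=2}^n max{rᵢ,1}` over all nonnegative integer
sequences `(r_2,…,r_n)` with `∑ rᵢ ≤ m` and `∑_{i=2}^t rᵢ ≤ ex(t;H)` for all `2 ≤ t ≤ n`. -/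
theorem stmt9 {α V : Type*} [Fintype V] (H : SimpleGraph α)
    (hH : 3 ≤ H.chromaticNumber) (G : SimpleGraph V) (n m : ℕ)
    (hn : Fintype.card V = n) (hm : edgeCnt G = m) (hfree : Freeof H G) (x y : V) :
    pathCnt G x y ≤
      sSup {P | ∃ r : ℕ → ℕ, (∑ i ∈ Finset.Icc 2 n, r i ≤ m) ∧
        (∀ t, 2 ≤ t → t ≤ n → ∑ i ∈ Finset.Icc 2 t, r i ≤ exNum t H) ∧
        P = ∏ i ∈ Finset.Icc 2 n, max (r i) 1} :=
  stmt9_general H G n m hn hm hfree x y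
end

section
/- Let G be an n-vertex graph with m edges and let x, y ∈ V(G). Then the number of paths from x to y in G is at most max over positive integers ℓ and positive integers d_1,…,d_ℓ with ∑ d_i ≤ m of ∏ d_i; in particular p_{x,y}(G) ≤ e^{m/e}. -/
open SimpleGraph Finset

/-!
Split a path from `x` to `y ≠ x` into its first edge `xz` and a path from `z` to `y` that avoids
`x`, hence lies in the graph `G - E(x)` obtained by deleting the `d = deg x` edges at `x`.
So `p_{x,y}(G) ≤ d · max_z p_{z,y}(G - E(x))` where `G - E(x)` has `m - d` edges, and induction
on `m` bounds `p_{x,y}(G)` by a product `d₁ ⋯ d_ℓ` of positive integers with sum at most `m`.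
Finally `d ≤ e^{d/e}` for every factor, as `log d ≤ d/e`.
-/

namespace PathCount

open SimpleGraph

def productsOfSumLE (m : ℕ) : Set ℕ :=
  {P | ∃ (ℓ : ℕ) (d : ℕ → ℕ), (∀ i < ℓ, 0 < d i) ∧
    (∑ i ∈ Finset.range ℓ, d i ≤ m) ∧ P = ∏ i ∈ Finset.range ℓ, d i}

lemma one_mem_productsOfSumLE (m : ℕ) : 1 ∈ productsOfSumLE m :=
  ⟨0, fun _ => 1, by simp, by simp, rfl⟩

lemma productsOfSumLE_mono {k m : ℕ} (h : k ≤ m) : productsOfSumLE k ⊆ productsOfSumLE m :=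
  fun _ ⟨ℓ, d, hpos, hsum, hP⟩ => ⟨ℓ, d, hpos, hsum.trans h, hP⟩

lemma mul_mem_productsOfSumLE {d k P : ℕ} (hd : 0 < d) (hP : P ∈ productsOfSumLE k) :
    d * P ∈ productsOfSumLE (d + k) := by
  obtain ⟨ℓ, e, hpos, hsum, rfl⟩ := hP
  refine ⟨ℓ + 1, fun | 0 => d | i + 1 => e i, ?_, ?_, ?_⟩
  · rintro (_ | i) hi
    exacts [hd, hpos i (by omega)]
  · simp only [Finset.sum_range_succ']
    omega
  · simp [Finset.prod_range_succ', mul_comm]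

lemma le_two_pow_of_mem_productsOfSumLE {m P : ℕ} (hP : P ∈ productsOfSumLE m) :
    P ≤ 2 ^ m := by
  obtain ⟨ℓ, d, -, hsum, rfl⟩ := hP
  calc ∏ i ∈ Finset.range ℓ, d i ≤ ∏ i ∈ Finset.range ℓ, 2 ^ d i :=
        Finset.prod_le_prod' fun i _ => (Nat.lt_two_pow_self).le
    _ = 2 ^ ∑ i ∈ Finset.range ℓ, d i := Finset.prod_pow_eq_pow_sum _ _ _
    _ ≤ 2 ^ m := Nat.pow_le_pow_right two_pos hsum

lemma bddAbove_productsOfSumLE (m : ℕ) : BddAbove (productsOfSumLE m) :=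
  ⟨2 ^ m, fun _ => le_two_pow_of_mem_productsOfSumLE⟩

lemma sSup_productsOfSumLE_mem (m : ℕ) : sSup (productsOfSumLE m) ∈ productsOfSumLE m :=
  Nat.sSup_mem ⟨1, one_mem_productsOfSumLE m⟩ (bddAbove_productsOfSumLE m)

lemma mul_sSup_productsOfSumLE_le {d m : ℕ} (h : d ≤ m) :
    d * sSup (productsOfSumLE (m - d)) ≤ sSup (productsOfSumLE m) := by
  obtain rfl | hd := d.eq_zero_or_pos
  · simp
  have hmem : d * sSup (productsOfSumLE (m - d)) ∈ productsOfSumLE (d + (m - d)) :=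
    mul_mem_productsOfSumLE hd (sSup_productsOfSumLE_mem _)
  exact le_csSup (bddAbove_productsOfSumLE m) (productsOfSumLE_mono (by omega) hmem)

lemma le_exp_div_exp_one (x : ℝ) : x ≤ Real.exp (x / Real.exp 1) := by
  -- `exp` lies above its tangent line at `1`
  have h := Real.add_one_le_exp (x / Real.exp 1 - 1)
  rwa [sub_add_cancel, Real.exp_sub, div_le_div_iff_of_pos_right (Real.exp_pos 1)] at h

lemma cast_le_exp_of_mem_productsOfSumLE {m P : ℕ} (hP : P ∈ productsOfSumLE m) :
    (P : ℝ) ≤ Real.exp (m / Real.exp 1) := by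
  obtain ⟨ℓ, d, -, hsum, rfl⟩ := hP
  push_cast
  calc ∏ i ∈ Finset.range ℓ, (d i : ℝ)
      ≤ ∏ i ∈ Finset.range ℓ, Real.exp (d i / Real.exp 1) :=
        Finset.prod_le_prod (fun i _ => by positivity) fun i _ => le_exp_div_exp_one _
    _ = Real.exp ((∑ i ∈ Finset.range ℓ, (d i : ℝ)) / Real.exp 1) := by
        rw [← Real.exp_sum, Finset.sum_div]
    _ ≤ Real.exp (m / Real.exp 1) := by gcongr; exact_mod_cast hsum

section FirstStep

variable {V : Type*} {G : SimpleGraph V} {x y : V}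

lemma pathCnt_self (G : SimpleGraph V) (x : V) : pathCnt G x x = 1 :=
  Nat.card_eq_one_iff_exists.2
    ⟨⟨.nil, .nil⟩, fun ⟨_, hp⟩ =>
      Subtype.ext (Walk.eq_nil_iff_nil.2 (Walk.isPath_iff_nil.1 hp))⟩

lemma edges_tail_disjoint_incidenceSet {p : G.Walk x y} (hp : p.IsPath) (hnil : ¬ p.Nil) :
    ∀ e ∈ p.tail.edges, e ∉ G.incidenceSet x := by
  have hx : x ∉ p.tail.support := by
    have := hp.support_nodup
    rw [← Walk.cons_support_tail hnil, List.nodup_cons] at this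
    exact this.1
  exact fun e he hxe => hx (Walk.mem_support_of_mem_edges he hxe.2)

def firstStep (hxy : x ≠ y) (p : G.Path x y) :
    Σ z : G.neighborSet x, (G.deleteIncidenceSet x).Path z y :=
  have hnil : ¬ p.1.Nil := Walk.not_nil_of_ne hxy
  ⟨⟨p.1.snd, p.1.adj_snd hnil⟩,
    ⟨p.1.tail.toDeleteEdges _ (edges_tail_disjoint_incidenceSet p.2 hnil),
      p.2.tail.transfer _⟩⟩

lemma cons_firstStep (hxy : x ≠ y) (p : G.Path x y) :
    Walk.cons (firstStep hxy p).1.2 ((firstStep hxy p).2.1.mapLe (G.deleteIncidenceSet_le x))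
      = p.1 := by
  simp only [firstStep, Walk.mapLe, deleteIncidenceSet, Walk.map_toDeleteEdges_eq]
  exact Walk.cons_tail_eq _ (Walk.not_nil_of_ne hxy)

lemma firstStep_injective (hxy : x ≠ y) : Function.Injective (firstStep (G := G) hxy) :=
  fun p q h => Subtype.ext <| by
    rw [← cons_firstStep hxy p, ← cons_firstStep hxy q, h]

lemma pathCnt_le_sum_neighborSet [Fintype V] [DecidableRel G.Adj] (hxy : x ≠ y) :
    pathCnt G x y ≤ ∑ z : G.neighborSet x, pathCnt (G.deleteIncidenceSet x) z y := by
  classical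
  calc pathCnt G x y ≤ Nat.card (Σ z : G.neighborSet x, (G.deleteIncidenceSet x).Path z y) :=
        Nat.card_le_card_of_injective _ (firstStep_injective hxy)
    _ = _ := Nat.card_sigma

end FirstStep

section EdgeCount

variable {V : Type*} [Fintype V]

lemma edgeCnt_eq_card_edgeFinset (G : SimpleGraph V) [DecidableRel G.Adj] :
    edgeCnt G = #G.edgeFinset := by
  rw [edgeCnt, Nat.card_eq_fintype_card, edgeFinset_card]

lemma degree_le_edgeCnt (G : SimpleGraph V) [DecidableRel G.Adj] (x : V) :
    G.degree x ≤ edgeCnt G :=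
  edgeCnt_eq_card_edgeFinset G ▸ G.degree_le_card_edgeFinset x

lemma edgeCnt_deleteIncidenceSet [DecidableEq V] (G : SimpleGraph V) [DecidableRel G.Adj]
    (x : V) : edgeCnt (G.deleteIncidenceSet x) = edgeCnt G - G.degree x := by
  rw [edgeCnt_eq_card_edgeFinset, edgeCnt_eq_card_edgeFinset, card_edgeFinset_deleteIncidenceSet]

theorem pathCnt_le_sSup_productsOfSumLE (G : SimpleGraph V) (x y : V) :
    pathCnt G x y ≤ sSup (productsOfSumLE (edgeCnt G)) := by
  classical
  induction hm : edgeCnt G using Nat.strong_induction_on generalizing G x with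
  | _ m IH =>
  obtain rfl | hxy := eq_or_ne x y
  · rw [pathCnt_self]
    exact le_csSup (bddAbove_productsOfSumLE m) (one_mem_productsOfSumLE m)
  have hdeg : G.degree x ≤ m := hm ▸ degree_le_edgeCnt G x
  have hdel : edgeCnt (G.deleteIncidenceSet x) = m - G.degree x := by
    rw [edgeCnt_deleteIncidenceSet, hm]
  calc pathCnt G x y ≤ ∑ z : G.neighborSet x, pathCnt (G.deleteIncidenceSet x) z y :=
        pathCnt_le_sum_neighborSet hxy
    _ ≤ ∑ _z : G.neighborSet x, sSup (productsOfSumLE (m - G.degree x)) :=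
        Finset.sum_le_sum fun z _ =>
          have : 0 < G.degree x := (G.degree_pos_iff_exists_adj x).2 ⟨z, z.2⟩
          IH _ (by omega) _ _ hdel
    _ = G.degree x * sSup (productsOfSumLE (m - G.degree x)) := by
        rw [Finset.sum_const, Finset.card_univ, card_neighborSet_eq_degree, smul_eq_mul]
    _ ≤ sSup (productsOfSumLE m) := mul_sSup_productsOfSumLE_le hdeg

end EdgeCount

end PathCount

open PathCount in
/-- If `G` has `m` edges then `p_{x,y}(G)` is at most the maximum of `∏ dᵢ` over
sequences of positive integers with `∑ dᵢ ≤ m`; in particular `p_{x,y}(G) ≤ e^{m/e}`. -/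
theorem stmt10 {V : Type*} [Fintype V] (G : SimpleGraph V) (m : ℕ)
    (hm : edgeCnt G = m) (x y : V) :
    pathCnt G x y ≤
        sSup {P | ∃ (ℓ : ℕ) (d : ℕ → ℕ), (∀ i < ℓ, 0 < d i) ∧
          (∑ i ∈ Finset.range ℓ, d i ≤ m) ∧ P = ∏ i ∈ Finset.range ℓ, d i} ∧
      (pathCnt G x y : ℝ) ≤ Real.exp (m / Real.exp 1) := by
  have hpath : pathCnt G x y ≤ sSup (productsOfSumLE m) :=
    hm ▸ pathCnt_le_sSup_productsOfSumLE G x y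
  refine ⟨hpath, ?_⟩
  calc (pathCnt G x y : ℝ) ≤ (sSup (productsOfSumLE m) : ℕ) := by exact_mod_cast hpath
    _ ≤ Real.exp (m / Real.exp 1) :=
        cast_le_exp_of_mem_productsOfSumLE (sSup_productsOfSumLE_mem m)
end

section
/- Let k ≥ 2 and let b,c ∈ {0,…,n} with c ≥ b + 2, and let s be an integer with 0 ≤ s ≤ b + c and s ≡ b + c (mod 2). Set t = (s + b − c)/2. If t ≥ 0 and t + 1 ≤ s, then C(s, t)/C(b+c, b) ≤ C(s, t+1)/C(b+c, b+1), i.e., shifting one unit from the larger class to the smaller class does not decrease the ratio of alternating-configuration counts. -/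
/-- The key binomial inequality: for `c ≥ b + 2`, `s ≤ b + c`, `s ≡ b + c (mod 2)`,
`t = (s + b - c)/2 ≥ 0` and `t + 1 ≤ s`, one has
`C(s,t)/C(b+c,b) ≤ C(s,t+1)/C(b+c,b+1)`. -/
theorem stmt11 (k n b c s t : ℕ) (hk : 2 ≤ k) (hb : b ≤ n) (hc : c ≤ n)
    (hbc : b + 2 ≤ c) (hs : s ≤ b + c) (ht : (2 * t : ℤ) = (s : ℤ) + b - c)
    (hts : t + 1 ≤ s) :
    (s.choose t : ℝ) / ((b + c).choose b) ≤
      (s.choose (t + 1) : ℝ) / ((b + c).choose (b + 1)) := by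
  have htb : t ≤ b := by omega
  have hB : 0 < (b + c).choose b := Nat.choose_pos (by omega)
  have hB' : 0 < (b + c).choose (b + 1) := Nat.choose_pos (by omega)
  -- key arithmetic inequality
  have hkey : c * (t + 1) ≤ (b + 1) * (s - t) := by
    obtain ⟨d, hd⟩ : ∃ d, c = b + d + 2 := ⟨c - b - 2, by omega⟩
    subst hd
    have hst : s - t = t + d + 2 := by omega
    rw [hst]; nlinarith [htb]
  -- identities
  have h1 : s.choose (t + 1) * (t + 1) = s.choose t * (s - t) :=
    Nat.choose_succ_right_eq s t
  have h2 : (b + c).choose (b + 1) * (b + 1) = (b + c).choose b * c := by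
    have := Nat.choose_succ_right_eq (b + c) b
    simpa using this
  -- natural number cross-multiplied inequality
  have hnat : s.choose t * (b + c).choose (b + 1) ≤
      s.choose (t + 1) * (b + c).choose b := by
    have hpos : 0 < (t + 1) * (b + 1) := by positivity
    refine Nat.le_of_mul_le_mul_right ?_ hpos
    calc s.choose t * (b + c).choose (b + 1) * ((t + 1) * (b + 1))
        = s.choose t * ((b + c).choose (b + 1) * (b + 1)) * (t + 1) := by ring
      _ = s.choose t * ((b + c).choose b * c) * (t + 1) := by rw [h2]
      _ = s.choose t * (b + c).choose b * (c * (t + 1)) := by ring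
      _ ≤ s.choose t * (b + c).choose b * ((b + 1) * (s - t)) :=
          Nat.mul_le_mul_left _ hkey
      _ = (s.choose t * (s - t)) * (b + c).choose b * (b + 1) := by ring
      _ = (s.choose (t + 1) * (t + 1)) * (b + c).choose b * (b + 1) := by rw [h1]
      _ = s.choose (t + 1) * (b + c).choose b * ((t + 1) * (b + 1)) := by ring
  rw [div_le_div_iff₀ (by exact_mod_cast hB) (by exact_mod_cast hB')]
  exact_mod_cast hnat
end

section
/- Let k ≥ 2 and n ∈ ℕ, and write n = qk + s with 0 ≤ s < k. Then the product ∏_{i=2}^{n} (t_k(i) − t_k(i−1)) of consecutive Turán-number differences equals (n − 1 − b)! · b! · (k−1)^b, where b = ⌊(n−1)/k⌋ and t_k(m) denotes the number of edges of the Turán graph T_k(m). -/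
/-!
The vertex `m` of `T_k(m + 1)` is adjacent to every earlier vertex except the `⌊m/k⌋` ones in its
own residue class, so `t_k(m + 1) - t_k(m) = m - ⌊m/k⌋`. As `m` runs through `1, …, N`, the
value `m - ⌊m/k⌋` increases by one at every `m` not divisible by `k`, producing
`(N - ⌊N/k⌋)!`, while at `m = jk` it equals `j (k - 1)`, producing `⌊N/k⌋! (k - 1)^⌊N/k⌋`.
-/

open Finset SimpleGraph Nat

/-- The number of edges of the Turán graph `T_k(m)`. -/
noncomputable def turanEdges (k m : ℕ) : ℕ := Nat.card (SimpleGraph.turanGraph m k).edgeSet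

lemma two_mul_turanEdges (k m : ℕ) :
    2 * turanEdges k m = ∑ v ∈ range m, ∑ w ∈ range m, if v % k ≠ w % k then 1 else 0 := by
  rw [turanEdges, Nat.card_eq_fintype_card, ← edgeFinset_card, ← sum_degrees_eq_twice_card_edges]
  simp_rw [degree, neighborFinset_eq_filter, turanGraph_adj, card_filter]
  rw [Fin.sum_univ_eq_sum_range (fun v ↦ ∑ w : Fin m, if v % k ≠ w % k then 1 else 0)]
  exact sum_congr rfl fun v _ ↦ Fin.sum_univ_eq_sum_range (fun w ↦ if v % k ≠ w % k then 1 else 0) m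

lemma card_filter_range_mod_ne (k m : ℕ) :
    #{v ∈ range m | v % k ≠ m % k} = m - m / k := by
  rcases k.eq_zero_or_pos with rfl | hk
  · simp [filter_true_of_mem (s := range m) (fun v hv ↦ (mem_range.mp hv).ne)]
  have hcount : #{v ∈ range m | v % k = m % k} = m / k := by
    rw [← count_eq_card_filter_range]
    have := count_modEq_card m hk m
    simp only [lt_irrefl, if_false, add_zero] at this
    convert this using 2
    rfl
  have hsplit := card_filter_add_card_filter_not (s := range m) (fun v ↦ v % k = m % k)
  rw [card_range, hcount] at hsplit
  simp only [← ne_eq] at hsplit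
  omega

lemma turanEdges_add_one (k m : ℕ) : turanEdges k (m + 1) = turanEdges k m + (m - m / k) := by
  have hrow : (∑ w ∈ range m, if m % k ≠ w % k then 1 else 0) = m - m / k := by
    simp_rw [← card_filter_range_mod_ne k m, card_filter, ne_comm]
  have hcol : (∑ v ∈ range m, if v % k ≠ m % k then 1 else 0) = m - m / k := by
    rw [← card_filter_range_mod_ne k m, card_filter]
  suffices 2 * turanEdges k (m + 1) = 2 * turanEdges k m + 2 * (m - m / k) by omega
  simp_rw [two_mul_turanEdges, sum_range_succ, sum_add_distrib, hrow, hcol, ne_self_iff_false,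
    if_false]
  omega

theorem prod_range_add_one_sub_div (k N : ℕ) :
    ∏ m ∈ range N, (m + 1 - (m + 1) / k) = (N - N / k)! * (N / k)! * (k - 1) ^ (N / k) := by
  induction N with
  | zero => simp
  | succ N ih =>
    rw [prod_range_succ, ih, Nat.succ_div]
    split_ifs with hdvd
    · have hmul : (N / k + 1) * k = N + 1 := by
        rw [← Nat.succ_div_of_dvd hdvd]; exact Nat.div_mul_cancel hdvd
      have hstep : N - N / k = (N / k + 1) * (k - 1) := by rw [Nat.mul_sub_one]; omega
      rw [Nat.add_sub_add_right, factorial_succ, pow_succ]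
      conv_lhs => arg 2; rw [hstep]
      ring
    · have hstep : N + 1 - N / k = N - N / k + 1 := by
        have := Nat.div_le_self N k; omega
      rw [add_zero, hstep, factorial_succ]
      ring

theorem stmt15_general (k n : ℕ) :
    ∏ i ∈ Finset.Icc 2 n, (turanEdges k i - turanEdges k (i - 1)) =
      (n - 1 - (n - 1) / k).factorial * ((n - 1) / k).factorial * (k - 1) ^ ((n - 1) / k) := by
  rw [← prod_range_add_one_sub_div, ← Ico_add_one_right_eq_Icc, prod_Ico_eq_prod_range]
  refine prod_congr rfl fun m _ ↦ ?_
  rw [show 2 + m = m + 1 + 1 by omega, Nat.add_sub_cancel, turanEdges_add_one, Nat.add_sub_cancel_left]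

/-- For `k ≥ 2`, `∏_{i=2}^n (t_k(i) - t_k(i-1)) = (n-1-b)!·b!·(k-1)^b` where
`b = ⌊(n-1)/k⌋`. -/
theorem stmt15 (k n : ℕ) (hk : 2 ≤ k) :
    ∏ i ∈ Finset.Icc 2 n, (turanEdges k i - turanEdges k (i - 1)) =
      (n - 1 - (n - 1) / k).factorial * ((n - 1) / k).factorial * (k - 1) ^ ((n - 1) / k) :=
  stmt15_general k n
end
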